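/- arXiv:2101.09762 — 6 statements merged into one kernel-verified Lean document; each statement's English description precedes it below -/
import Mathlib

section
/- Let n ≥ 2 and d ≥ 4 be integers, and let r be an integer with 0 ≤ r ≤ ⌈(1/(n+1))·C(n+d,n)⌉. Let q be an integer and ε an integer with 0 ≤ ε < n such that n·q + ε = r·(n+1) − C(n+d−1,n). Then n·ε + q ≤ C(n+d−2, n−1). -/
private lemma c3 (a : ℕ) : (a+2)*(a+3)*(a+4) ≤ 6 * Nat.choose (a+4) 3 := by
  induction a with
  | zero => decide
  | succ b ih =>
    have h2 : Nat.choose (b+4) 2 * 2 = Nat.choose (b+4) 1 * (b+3) := by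
      simpa using Nat.choose_succ_right_eq (b+4) 1
    simp only [Nat.choose_one_right] at h2
    show (b+3)*(b+4)*(b+5) ≤ 6 * Nat.choose (b+5) 3
    rw [show b+5 = (b+4)+1 from rfl, show (3:ℕ) = 2+1 from rfl, Nat.choose_succ_succ]
    nlinarith [ih]

private lemma key_ineq (a e : ℕ)
    (h : ¬((a = 0 ∧ e ≤ 1) ∨ (a = 1 ∧ e = 0) ∨ (a = 2 ∧ e = 0))) :
    (a^2+4*a+3)*(a+1) + (a+e+4).choose a + (a+2)
      ≤ (a+1) * (a+e+4).choose (a+1) := by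
  match a with
  | 0 =>
    have he : 2 ≤ e := by omega
    simp only [Nat.zero_add, Nat.choose_zero_right, Nat.choose_one_right]
    norm_num
    omega
  | 1 =>
    have he : 1 ≤ e := by omega
    have h2 : Nat.choose (e+5) 2 * 2 = Nat.choose (e+5) 1 * (e+4) := by
      simpa using Nat.choose_succ_right_eq (e+5) 1
    simp only [Nat.choose_one_right] at h2
    rw [show (1:ℕ)+e+4 = e+5 from by omega]
    simp only [Nat.choose_one_right]
    nlinarith [h2]
  | 2 =>
    have he : 1 ≤ e := by omega
    rw [show (2:ℕ)+e+4 = e+6 from by omega]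
    have h2 : Nat.choose (e+6) 2 * 2 = Nat.choose (e+6) 1 * (e+5) := by
      simpa using Nat.choose_succ_right_eq (e+6) 1
    have h3 : Nat.choose (e+6) 3 * 3 = Nat.choose (e+6) 2 * (e+4) := by
      simpa using Nat.choose_succ_right_eq (e+6) 2
    simp only [Nat.choose_one_right] at h2
    nlinarith [h2, h3]
  | (b+3) =>
    have hId : ((b+3)+e+4).choose ((b+3)+1) * ((b+3)+1)
        = ((b+3)+e+4).choose (b+3) * (e+4) := by
      have := Nat.choose_succ_right_eq ((b+3)+e+4) (b+3)
      rwa [show (b+3)+e+4-(b+3) = e+4 from by omega] at this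
    set B := ((b+3)+e+4).choose ((b+3)+1) with hB
    set C2 := ((b+3)+e+4).choose (b+3) with hC2
    -- B ≥ C(b+7,3)
    have hmono : (b+7).choose (b+4) ≤ B := by
      apply Nat.choose_le_choose
      omega
    have hsymm : (b+7).choose (b+4) = (b+7).choose 3 := by
      rw [show b+4 = (b+7)-3 from by omega]
      exact Nat.choose_symm (by omega)
    have h6B : (b+5)*(b+6)*(b+7) ≤ 6 * B := by
      have := c3 (b+3)
      simp only [show b+3+2 = b+5 from by omega, show b+3+3 = b+6 from by omega,
        show b+3+4 = b+7 from by omega] at this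
      calc (b+5)*(b+6)*(b+7) ≤ 6 * (b+7).choose 3 := this
        _ = 6 * (b+7).choose (b+4) := by rw [hsymm]
        _ ≤ 6 * B := Nat.mul_le_mul_left _ hmono
    set P := ((b+3)^2+4*(b+3)+3)*((b+3)+1) + ((b+3)+2) with hP
    have h8P : 8 * P ≤ (b+4)*(b+5)*(b+6)*(b+7) := by
      rw [hP]; nlinarith [sq_nonneg b]
    have hstep : (e+4)*P ≤ (e+3)*((b+4)*B) := by
      have t1 : 24*((e+4)*P) ≤ 24*((e+3)*((b+4)*B)) := by
        calc 24*((e+4)*P) = (3*(e+4))*(8*P) := by ring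
          _ ≤ (4*(e+3))*(8*P) := Nat.mul_le_mul_right _ (by omega)
          _ ≤ (4*(e+3))*((b+4)*(b+5)*(b+6)*(b+7)) := Nat.mul_le_mul_left _ h8P
          _ = ((4*(e+3))*(b+4))*((b+5)*(b+6)*(b+7)) := by ring
          _ ≤ ((4*(e+3))*(b+4))*(6*B) := Nat.mul_le_mul_left _ h6B
          _ = 24*((e+3)*((b+4)*B)) := by ring
      exact Nat.le_of_mul_le_mul_left t1 (by norm_num)
    have hC2e : (e+4)*C2 = (b+4)*B := by
      calc (e+4)*C2 = C2*(e+4) := mul_comm _ _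
        _ = B*((b+3)+1) := hId.symm
        _ = (b+4)*B := by ring
    have hfin : (e+4)*(P + C2) ≤ (e+4)*((b+4)*B) := by
      calc (e+4)*(P + C2) = (e+4)*P + (e+4)*C2 := by ring
        _ ≤ (e+3)*((b+4)*B) + (b+4)*B := by
            exact Nat.add_le_add hstep (le_of_eq hC2e)
        _ = (e+4)*((b+4)*B) := by ring
    have hres : P + C2 ≤ (b+4)*B := Nat.le_of_mul_le_mul_left hfin (by omega)
    show ((b+3)^2+4*(b+3)+3)*((b+3)+1) + C2 + ((b+3)+2) ≤ ((b+3)+1) * B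
    rw [hP] at hres
    linarith [hres]

/-- Lemma 2.6(1) of Hà–Mantero (Alexander–Hirschowitz survey): numerical inequality
`n·ε + q ≤ C(n+d−2, n−1)`. -/
theorem stmt0 (n d : ℕ) (r q ε : ℤ) (hn : 2 ≤ n) (hd : 4 ≤ d)
    (hr0 : 0 ≤ r) (hr : r ≤ ⌈(((n + d).choose n : ℚ)) / ((n : ℚ) + 1)⌉)
    (hε0 : 0 ≤ ε) (hεn : ε < (n : ℤ))
    (heq : (n : ℤ) * q + ε = r * ((n : ℤ) + 1) - ((n + d - 1).choose n : ℤ)) :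
    (n : ℤ) * ε + q ≤ ((n + d - 2).choose (n - 1) : ℤ) := by
  -- Step 1: r*(n+1) ≤ N + n
  have hN : r * ((n:ℤ)+1) ≤ ((n + d).choose n : ℤ) + n := by
    have hpos : (0:ℚ) < (n:ℚ)+1 := by positivity
    have h1 : (r:ℚ) < (((n + d).choose n : ℚ)) / ((n : ℚ) + 1) + 1 := by
      calc (r:ℚ) ≤ ((⌈(((n + d).choose n : ℚ)) / ((n : ℚ) + 1)⌉ : ℤ) : ℚ) := by
            exact_mod_cast hr
        _ < _ := Int.ceil_lt_add_one _
    have h2 : (r:ℚ) * ((n:ℚ)+1) < ((n + d).choose n : ℚ) + ((n:ℚ)+1) := by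
      have := mul_lt_mul_of_pos_right h1 hpos
      rwa [add_mul, div_mul_cancel₀ _ (ne_of_gt hpos), one_mul] at this
    have h3 : r * ((n:ℤ)+1) < ((n + d).choose n : ℤ) + ((n:ℤ)+1) := by exact_mod_cast h2
    omega
  clear hr
  obtain ⟨a, rfl⟩ : ∃ a, n = a + 2 := ⟨n - 2, by omega⟩
  obtain ⟨e, rfl⟩ : ∃ e, d = e + 4 := ⟨d - 4, by omega⟩
  simp only [show a + 2 + (e + 4) = a + e + 6 from by ring,
    show a + 2 + (e + 4) - 1 = a + e + 5 from by omega,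
    show a + 2 + (e + 4) - 2 = a + e + 4 from by omega,
    show a + 2 - 1 = a + 1 from by omega] at *
  by_cases hx : (a = 0 ∧ e ≤ 1) ∨ (a = 1 ∧ e = 0) ∨ (a = 2 ∧ e = 0)
  · -- four exceptional cases, fully concrete
    rcases hx with ⟨rfl, he⟩ | ⟨rfl, rfl⟩ | ⟨rfl, rfl⟩
    · interval_cases e <;> norm_num [Nat.choose] at heq hN ⊢ <;> omega
    · norm_num [Nat.choose] at heq hN ⊢; omega
    · norm_num [Nat.choose] at heq hN ⊢; omega
  · -- general case
    have key := key_ineq a e hx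
    have hPascal : (a+e+6).choose (a+2)
        = (a+e+5).choose (a+2) + ((a+e+4).choose (a+1) + (a+e+4).choose a) := by
      rw [show a+e+6 = (a+e+5)+1 from by ring, show a+2 = (a+1)+1 from rfl,
        Nat.choose_succ_succ, show a+e+5 = (a+e+4)+1 from by ring,
        Nat.choose_succ_succ]
      ring
    have keyZ : ((a:ℤ)^2+4*a+3)*((a:ℤ)+1) + ((a+e+4).choose a : ℤ) + ((a:ℤ)+2)
        ≤ ((a:ℤ)+1) * ((a+e+4).choose (a+1) : ℤ) := by exact_mod_cast key
    have hPZ : ((a+e+6).choose (a+2) : ℤ)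
        = ((a+e+5).choose (a+2) : ℤ) + (((a+e+4).choose (a+1) : ℤ)
          + ((a+e+4).choose a : ℤ)) := by exact_mod_cast hPascal
    have hεa : ε ≤ (a:ℤ) + 1 := by push_cast at hεn; omega
    have hεmul : (((a:ℤ)+2)^2 - 1) * ε ≤ (((a:ℤ)+2)^2 - 1) * ((a:ℤ)+1) :=
      mul_le_mul_of_nonneg_left hεa (by nlinarith [Int.natCast_nonneg a])
    have hmul : ((a:ℤ)+2) * (((a:ℤ)+2) * ε + q) ≤ ((a:ℤ)+2) * ((a+e+4).choose (a+1) : ℤ) := by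
      push_cast at heq hN
      nlinarith [hεmul, keyZ, hPZ, heq, hN]
    have hdiv := le_of_mul_le_mul_left hmul (by positivity : (0:ℤ) < (a:ℤ)+2)
    push_cast
    push_cast at hdiv
    linarith
end

section
/- Let n ≥ 2 and d ≥ 4 be integers, and let r be an integer with 0 ≤ r ≤ ⌈(1/(n+1))·C(n+d,n)⌉. Let q be an integer and ε an integer with 0 ≤ ε < n such that n·q + ε = r·(n+1) − C(n+d−1,n). Then C(n+d−2, n) ≤ (r − q − ε)·(n+1). -/
/-!
Write `A, B, N` for `C(n+d-1,n), C(n+d-2,n), C(n+d,n)`. Multiplying the goal by `n` and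
eliminating `q` turns it into `n B ≤ (n+1)(A - r - (n-1)ε)`, and by integrality it is enough to
prove this up to an error smaller than `n`. The ceiling bound gives `r (n+1) ≤ N + n`, and
`ε ≤ n - 1`, so it suffices that the gap `(n+1) A - n B - N` exceeds `(n+1)(n-1)²`. By Pascal's
rule the gap equals `(d-1) C(n+d-2, n-2)`, which is large enough except for `d = 4, n ≤ 4`;
those three cases are checked directly.
-/

lemma mul_add_one_le_of_le_ceil_div {a r : ℤ} {b : ℕ} (h : r ≤ ⌈(a : ℚ) / ((b : ℚ) + 1)⌉) :
    r * (b + 1) ≤ a + b := by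
  rw [Int.le_ceil_iff, lt_div_iff₀ (by positivity)] at h
  have : (r - 1) * (b + 1) < a := by exact_mod_cast h
  linarith

lemma le_sub_sub_mul_of_gap {n A B N r q ε : ℤ} (hn : 0 < n) (hεn : ε < n)
    (hr : r * (n + 1) ≤ N + n) (heq : n * q + ε = r * (n + 1) - A)
    (hgap : (n + 1) * (n - 1) ^ 2 < (n + 1) * A - n * B - N) :
    B ≤ (r - q - ε) * (n + 1) := by
  have hε : (n + 1) * (n - 1) * ε ≤ (n + 1) * (n - 1) * (n - 1) :=
    mul_le_mul_of_nonneg_left (by omega) (by nlinarith)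
  have hmul : n * (-1) < n * ((r - q - ε) * (n + 1) - B) := by
    linear_combination (n + 1) * heq + hr + hε + hgap
  have := lt_of_mul_lt_mul_left hmul hn.le
  linarith

lemma add_three_mul_choose_eq (k j : ℕ) :
    (k + 3) * (k + j + 2).choose (k + 2) =
      (k + 2) * (k + j + 1).choose (k + 2) + (k + j + 3).choose (k + 2)
        + j * (k + j + 1).choose k := by
  have hA := Nat.choose_succ_succ' (k + j + 1) (k + 1)
  have hN := Nat.choose_succ_succ' (k + j + 2) (k + 1)
  have hC := Nat.choose_succ_succ' (k + j + 1) k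
  have hR := Nat.choose_succ_right_eq (k + j + 1) k
  rw [show k + j + 1 - k = j + 1 by omega] at hR
  linear_combination (k + 2) * hA - hN - hC + hR

lemma add_three_mul_sq_lt_mul_choose {k j : ℕ} (hj : 3 ≤ j) (hkj : 3 ≤ k ∨ 4 ≤ j) :
    (k + 3) * (k + 1) ^ 2 < j * (k + j + 1).choose k := by
  rcases hkj with hk | hj
  · have h24 : (k + 4).choose 4 * 24 = (k + 4) * (k + 3) * (k + 2) * (k + 1) := by
      have := Nat.descFactorial_eq_factorial_mul_choose (k + 4) 4
      simp [Nat.descFactorial, Nat.factorial] at this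
      linarith
    have hmono : (k + 4).choose 4 ≤ (k + j + 1).choose k := by
      rw [← Nat.choose_symm_add]; exact Nat.choose_le_choose k (by omega)
    have hmul : 3 * (k + 4).choose 4 ≤ j * (k + j + 1).choose k := Nat.mul_le_mul hj hmono
    nlinarith
  · have h120 : (k + 5).choose 5 * 120 = (k + 5) * (k + 4) * (k + 3) * (k + 2) * (k + 1) := by
      have := Nat.descFactorial_eq_factorial_mul_choose (k + 5) 5
      simp [Nat.descFactorial, Nat.factorial] at this
      linarith
    have hmono : (k + 5).choose 5 ≤ (k + j + 1).choose k := by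
      rw [← Nat.choose_symm_add]; exact Nat.choose_le_choose k (by omega)
    have hmul : 4 * (k + 5).choose 5 ≤ j * (k + j + 1).choose k := Nat.mul_le_mul hj hmono
    nlinarith

theorem stmt1_general (n d : ℕ) (r q ε : ℤ) (hn : 2 ≤ n) (hd : 4 ≤ d)
    (hr : r ≤ ⌈(((n + d).choose n : ℚ)) / ((n : ℚ) + 1)⌉)
    (hεn : ε < (n : ℤ))
    (heq : (n : ℤ) * q + ε = r * ((n : ℤ) + 1) - ((n + d - 1).choose n : ℤ)) :
    ((n + d - 2).choose n : ℤ) ≤ (r - q - ε) * ((n : ℤ) + 1) := by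
  have hr' : r * (n + 1) ≤ (n + d).choose n + n :=
    mul_add_one_le_of_le_ceil_div (by rwa [Int.cast_natCast])
  obtain ⟨k, rfl⟩ : ∃ k, n = k + 2 := ⟨n - 2, by omega⟩
  obtain ⟨j, rfl⟩ : ∃ j, d = j + 1 := ⟨d - 1, by omega⟩
  rw [show k + 2 + (j + 1) = k + j + 3 by omega] at hr'
  rw [show k + 2 + (j + 1) - 1 = k + j + 2 by omega] at heq
  rw [show k + 2 + (j + 1) - 2 = k + j + 1 by omega]
  by_cases hsmall : k ≤ 2 ∧ j = 3
  · obtain ⟨hk, rfl⟩ := hsmall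
    interval_cases k <;> simp [Nat.choose] at hr' heq ⊢ <;> omega
  · refine le_sub_sub_mul_of_gap (by omega) hεn hr' heq ?_
    have hid := add_three_mul_choose_eq k j
    have hgap := add_three_mul_sq_lt_mul_choose (k := k) (j := j) (by omega) (by omega)
    push_cast
    zify at hid hgap
    linarith

/-- Lemma 2.6(2): `C(n+d−2, n) ≤ (r − q − ε)·(n+1)`. -/
theorem stmt1 (n d : ℕ) (r q ε : ℤ) (hn : 2 ≤ n) (hd : 4 ≤ d)
    (hr0 : 0 ≤ r) (hr : r ≤ ⌈(((n + d).choose n : ℚ)) / ((n : ℚ) + 1)⌉)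
    (hε0 : 0 ≤ ε) (hεn : ε < (n : ℤ))
    (heq : (n : ℤ) * q + ε = r * ((n : ℤ) + 1) - ((n + d - 1).choose n : ℤ)) :
    ((n + d - 2).choose n : ℤ) ≤ (r - q - ε) * ((n : ℤ) + 1) :=
  stmt1_general n d r q ε hn hd hr hεn heq
end

section
/- Let n ≥ 8 and d = 4, and let r be an integer with ⌊(1/(n+1))·C(n+4,n)⌋ ≤ r ≤ ⌈(1/(n+1))·C(n+4,n)⌉. Let q be an integer and ε an integer with 0 ≤ ε < n such that n·q + ε = r·(n+1) − C(n+3,n). Then r − q − ε ≥ n + 1. -/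
set_option maxHeartbeats 1000000

lemma choose2_eq (n : ℕ) : 2 * (n+2).choose 2 = (n+1)*(n+2) := by
  induction n with
  | zero => decide
  | succ k ih =>
    have h : (k+3).choose 2 = (k+2).choose 1 + (k+2).choose 2 :=
      Nat.choose_succ_succ (k+2) 1
    rw [show k+1+2 = k+3 from rfl, h, Nat.choose_one_right]
    ring_nf
    ring_nf at ih
    omega

lemma choose3_eq (n : ℕ) : 6 * (n+3).choose 3 = (n+1)*(n+2)*(n+3) := by
  induction n with
  | zero => decide
  | succ k ih =>
    have h : (k+4).choose 3 = (k+3).choose 2 + (k+3).choose 3 :=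
      Nat.choose_succ_succ (k+3) 2
    have h2 := choose2_eq (k+1)
    rw [show k+1+3 = k+4 from rfl, h]
    nlinarith [ih, h2]

lemma choose4_eq (n : ℕ) : 24 * (n+4).choose 4 = (n+1)*(n+2)*(n+3)*(n+4) := by
  induction n with
  | zero => decide
  | succ k ih =>
    have h : (k+5).choose 4 = (k+4).choose 3 + (k+4).choose 4 :=
      Nat.choose_succ_succ (k+4) 3
    have h3 := choose3_eq (k+1)
    rw [show k+1+4 = k+5 from rfl, h]
    nlinarith [ih, h3]

/-- Lemma 2.6(3): for `d = 4` and `n ≥ 8`, `r − q − ε ≥ n + 1`. -/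
theorem stmt2 (n : ℕ) (r q ε : ℤ) (hn : 8 ≤ n)
    (hrl : ⌊(((n + 4).choose n : ℚ)) / ((n : ℚ) + 1)⌋ ≤ r)
    (hru : r ≤ ⌈(((n + 4).choose n : ℚ)) / ((n : ℚ) + 1)⌉)
    (hε0 : 0 ≤ ε) (hεn : ε < (n : ℤ))
    (heq : (n : ℤ) * q + ε = r * ((n : ℤ) + 1) - ((n + 3).choose n : ℤ)) :
    r - q - ε ≥ (n : ℤ) + 1 := by
  have hs3 : (n+3).choose n = (n+3).choose 3 := by
    have := Nat.choose_symm (n := n+3) (k := 3) (by omega)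
    simpa using this
  have hs4 : (n+4).choose n = (n+4).choose 4 := by
    have := Nat.choose_symm (n := n+4) (k := 4) (by omega)
    simpa using this
  have hB6 : 6 * ((n+3).choose n : ℤ) = ((n:ℤ)+1)*((n:ℤ)+2)*((n:ℤ)+3) := by
    rw [hs3]
    exact_mod_cast choose3_eq n
  have hA24 : 24 * ((n+4).choose n : ℤ)
      = ((n:ℤ)+1)*((n:ℤ)+2)*((n:ℤ)+3)*((n:ℤ)+4) := by
    rw [hs4]
    exact_mod_cast choose4_eq n
  have hNpos : (0:ℚ) < (n:ℚ) + 1 := by positivity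
  set x : ℚ := (((n + 4).choose n : ℚ)) / ((n : ℚ) + 1) with hx
  have hup : (r:ℚ) < x + 1 := by
    calc (r:ℚ) ≤ (⌈x⌉ : ℚ) := by exact_mod_cast hru
    _ < x + 1 := Int.ceil_lt_add_one x
  have hlo : x - 1 < (r:ℚ) := by
    calc x - 1 < (⌊x⌋ : ℚ) := Int.sub_one_lt_floor x
    _ ≤ (r:ℚ) := by exact_mod_cast hrl
  have hupq : (r:ℚ) * ((n:ℚ)+1) < ((n+4).choose n : ℚ) + ((n:ℚ)+1) := by
    have := mul_lt_mul_of_pos_right hup hNpos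
    rwa [hx, add_mul, one_mul, div_mul_cancel₀ _ (ne_of_gt hNpos)] at this
  have hloq : ((n+4).choose n : ℚ) - ((n:ℚ)+1) < (r:ℚ) * ((n:ℚ)+1) := by
    have := mul_lt_mul_of_pos_right hlo hNpos
    rwa [hx, sub_mul, one_mul, div_mul_cancel₀ _ (ne_of_gt hNpos)] at this
  have hupz : r * ((n:ℤ)+1) ≤ ((n+4).choose n : ℤ) + (n:ℤ) := by
    have h : ((r * ((n:ℤ)+1) : ℤ) : ℚ) < ((((n+4).choose n : ℤ) + (n:ℤ) + 1 : ℤ) : ℚ) := by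
      push_cast
      linarith [hupq]
    have := (@Int.cast_lt ℚ _ _ _).mp h
    omega
  have hloz : ((n+4).choose n : ℤ) - (n:ℤ) ≤ r * ((n:ℤ)+1) := by
    have h : ((((n+4).choose n : ℤ) - (n:ℤ) - 1 : ℤ) : ℚ) < ((r * ((n:ℤ)+1) : ℤ) : ℚ) := by
      push_cast
      linarith [hloq]
    have := (@Int.cast_lt ℚ _ _ _).mp h
    omega
  have hN8 : (8:ℤ) ≤ (n:ℤ) := by exact_mod_cast hn
  by_cases hsmall : (n:ℤ) ≤ 9
  · have h89 : (n:ℤ) = 8 ∨ (n:ℤ) = 9 := by omega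
    rcases h89 with h | h <;> rw [h] at hB6 hA24 hupz hloz heq hεn ⊢ <;> omega
  · push_neg at hsmall
    have hN10 : (10:ℤ) ≤ (n:ℤ) := by omega
    have h24r : 24 * r ≤ ((n:ℤ)+2)*((n:ℤ)+3)*((n:ℤ)+4) + 23 := by
      have h1 : 24 * r * ((n:ℤ)+1)
          ≤ ((n:ℤ)+1)*((n:ℤ)+2)*((n:ℤ)+3)*((n:ℤ)+4) + 24*(n:ℤ) := by
        nlinarith [hupz, hA24]
      have h2 : (24 * r) * ((n:ℤ)+1)
          < (((n:ℤ)+2)*((n:ℤ)+3)*((n:ℤ)+4) + 24) * ((n:ℤ)+1) := by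
        nlinarith [h1]
      have hpos : (0:ℤ) < (n:ℤ) + 1 := by omega
      have := lt_of_mul_lt_mul_right h2 (le_of_lt hpos)
      omega
    have hεle : ε ≤ (n:ℤ) - 1 := by omega
    have hprod : ((n:ℤ)-1) * ε ≤ ((n:ℤ)-1) * ((n:ℤ)-1) :=
      mul_le_mul_of_nonneg_left hεle (by omega)
    have hcube : 0 ≤ ((n:ℤ) - 10) * (3*(n:ℤ)*(n:ℤ) - 3*(n:ℤ) + 12) :=
      mul_nonneg (by omega) (by nlinarith)
    have key : (n:ℤ) * ((n:ℤ)+1) ≤ ((n+3).choose n : ℤ) - r - ((n:ℤ)-1) * ε := by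
      nlinarith [hB6, h24r, hprod, hcube]
    have hmul : (n:ℤ) * ((n:ℤ)+1) ≤ (n:ℤ) * (r - q - ε) := by
      nlinarith [heq, key]
    have hNpos' : (0:ℤ) < (n:ℤ) := by omega
    exact le_of_mul_le_mul_left hmul hNpos'
end

section
/- Let n ≥ 2 and d ≥ 4 be integers, and let r be an integer with ⌊(1/(n+1))·C(n+d,n)⌋ ≤ r ≤ ⌈(1/(n+1))·C(n+d,n)⌉. Let q be an integer and ε an integer with 0 ≤ ε < n such that n·q + ε = r·(n+1) − C(n+d−1,n). Then q ≥ ε. -/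
lemma aux3 (n : ℕ) (hn : 2 ≤ n) : 2 * n + 2 ≤ (n + 3).choose 3 := by
  induction n, hn using Nat.le_induction with
  | base => decide
  | succ m hm ih =>
    have h1 : (m + 3 + 1).choose 3 = (m + 3).choose 2 + (m + 3).choose 3 :=
      Nat.choose_succ_succ' (m + 3) 2 ▸ rfl
    have h2 : (5 : ℕ).choose 2 ≤ (m + 3).choose 2 := Nat.choose_le_choose 2 (by omega)
    simp [Nat.choose_succ_succ] at h1 ⊢
    omega

lemma aux4 (n : ℕ) (hn : 2 ≤ n) : n ^ 2 + n ≤ (n + 3).choose 4 + 1 := by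
  induction n, hn using Nat.le_induction with
  | base => decide
  | succ m hm ih =>
    have h1 : (m + 3 + 1).choose 4 = (m + 3).choose 3 + (m + 3).choose 4 :=
      Nat.choose_succ_succ (m + 3) 3
    have h2 := aux3 m hm
    have h3 : (m + 1) ^ 2 = m ^ 2 + 2 * m + 1 := by ring
    have h4 : (m + 1 + 3).choose 4 = (m + 3 + 1).choose 4 := by
      rw [show m + 1 + 3 = m + 3 + 1 from by omega]
    omega

lemma key (n d : ℕ) (hn : 2 ≤ n) (hd : 4 ≤ d) :
    n ^ 2 + n ≤ (n + d - 1).choose (n - 1) + 1 := by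
  have h1 : (n + 3).choose (n - 1) ≤ (n + d - 1).choose (n - 1) :=
    Nat.choose_le_choose _ (by omega)
  have h2 : (n + 3).choose (n - 1) = (n + 3).choose 4 := by
    have := Nat.choose_symm (show 4 ≤ n + 3 by omega)
    have h3 : n + 3 - 4 = n - 1 := by omega
    rw [h3] at this
    omega
  have := aux4 n hn
  omega

/-- Lemma 2.6(4): `q ≥ ε`. -/
theorem stmt3 (n d : ℕ) (r q ε : ℤ) (hn : 2 ≤ n) (hd : 4 ≤ d)
    (hrl : ⌊(((n + d).choose n : ℚ)) / ((n : ℚ) + 1)⌋ ≤ r)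
    (hru : r ≤ ⌈(((n + d).choose n : ℚ)) / ((n : ℚ) + 1)⌉)
    (hε0 : 0 ≤ ε) (hεn : ε < (n : ℤ))
    (heq : (n : ℤ) * q + ε = r * ((n : ℤ) + 1) - ((n + d - 1).choose n : ℤ)) :
    q ≥ ε := by
  have hnQ : (0 : ℚ) < (n : ℚ) + 1 := by positivity
  -- Pascal: choose(n+d, n) = choose(n+d-1, n) + choose(n+d-1, n-1)
  have hPascal : (n + d).choose n = (n + d - 1).choose n + (n + d - 1).choose (n - 1) := by
    have h := Nat.choose_succ_succ (n + d - 1) (n - 1)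
    simp only [Nat.succ_eq_add_one] at h
    rw [show (n - 1) + 1 = n from by omega, show (n + d - 1) + 1 = n + d from by omega] at h
    omega
  -- floor bound: N < (r+1)*(n+1)
  have hfl : ((n + d).choose n : ℤ) < (r + 1) * ((n : ℤ) + 1) := by
    have h1 : ((n + d).choose n : ℚ) / ((n : ℚ) + 1) - 1 < (⌊(((n + d).choose n : ℚ)) / ((n : ℚ) + 1)⌋ : ℚ) :=
      Int.sub_one_lt_floor _
    have h2 : ((n + d).choose n : ℚ) / ((n : ℚ) + 1) < (r : ℚ) + 1 := by
      have : ((⌊(((n + d).choose n : ℚ)) / ((n : ℚ) + 1)⌋ : ℤ) : ℚ) ≤ (r : ℚ) := by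
        exact_mod_cast hrl
      linarith
    rw [div_lt_iff₀ hnQ] at h2
    exact_mod_cast h2
  have hkey : (n : ℤ) ^ 2 + (n : ℤ) ≤ ((n + d - 1).choose (n - 1) : ℤ) + 1 := by
    exact_mod_cast key n d hn hd
  have hPZ : ((n + d).choose n : ℤ) = ((n + d - 1).choose n : ℤ) + ((n + d - 1).choose (n - 1) : ℤ) := by
    exact_mod_cast hPascal
  have hnZ : (2 : ℤ) ≤ (n : ℤ) := by exact_mod_cast hn
  have hprod : ((n : ℤ) + 1) * ε ≤ ((n : ℤ) + 1) * ((n : ℤ) - 1) :=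
    mul_le_mul_of_nonneg_left (by linarith) (by linarith)
  have hmul : (n : ℤ) * ε ≤ (n : ℤ) * q := by nlinarith [hfl, hkey, hPZ, heq]
  exact le_of_mul_le_mul_left hmul (by linarith)
end

section
/- Let R = C[x_0,...,x_n] with n ≥ 1, and let I_X be the defining ideal of a zero-dimensional subscheme X of P^n, with Y ⊆ X a zero-dimensional subscheme (so I_X ⊆ I_Y, both saturated ideals of height n). If H_{R/I_X}(d) = e(R/I_X) for some degree d, then H_{R/I_Y}(d) = e(R/I_Y). -/
/-- The Hilbert function of `R/I` in degree `d`. -/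
noncomputable def hilbertFn {k : Type*} [Field k] {m : ℕ}
    (I : Ideal (MvPolynomial (Fin m) k)) (d : ℕ) : ℕ :=
  Module.finrank k
    (↥(MvPolynomial.homogeneousSubmodule (Fin m) k d) ⧸
      (Submodule.comap (MvPolynomial.homogeneousSubmodule (Fin m) k d).subtype
        (Submodule.restrictScalars k I)))

/-!
Since `I_X` and `I_Y` are saturated, the irrelevant ideal lies in no associated prime of `R/I_X`
or `R/I_Y`; over the infinite field `ℂ` a linear form can therefore avoid all of them, and it is a
nonzerodivisor. Multiplication by it embeds degree `d` into degree `d + 1`, so the Hilbert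
functions of `R/I_Y` and of `I_Y/I_X` are nondecreasing and bounded by their eventual values
`e(R/I_Y)` and `e(R/I_X) - e(R/I_Y)`. As the two add up to `H_{R/I_X}(d) = e(R/I_X)`, both
bounds are attained.
-/

open MvPolynomial

theorem Monotone.le_of_eventually_eq {α β : Type*} [SemilatticeSup α] [Preorder β] {f : α → β}
    (hf : Monotone f) {b : β} (h : ∀ᶠ x in Filter.atTop, f x = b) (a : α) : f a ≤ b := by
  have : Nonempty α := ⟨a⟩
  obtain ⟨N, hN⟩ := Filter.eventually_atTop.mp h
  exact hN (a ⊔ N) le_sup_right ▸ hf le_sup_left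

section AssociatedPrimes

variable {R : Type*} [CommRing R] [IsNoetherianRing R]

theorem exists_isSMulRegular_mem_of_not_le_associatedPrimes {K M : Type*} [Field K] [Infinite K]
    [Algebra K R] [AddCommGroup M] [Module R M] [Module.Finite R M] (V : Submodule K R)
    (hV : ∀ p ∈ associatedPrimes R M, ¬V ≤ p.restrictScalars K) :
    ∃ v ∈ V, IsSMulRegular M v := by
  by_contra! h
  have : Finite (associatedPrimes R M) := (associatedPrimes.finite R M).to_subtype
  have hcover : ⋃ p : associatedPrimes R M, ((p.1.restrictScalars K).comap V.subtype : Set V) =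
      Set.univ := by
    refine Set.eq_univ_of_forall fun v ↦ ?_
    have hv : (v : R) ∈ ⋃ p ∈ associatedPrimes R M, (p : Set R) := by
      rw [biUnion_associatedPrimes_eq_compl_regular]
      exact h v v.2
    simpa using hv
  obtain ⟨⟨p, hp⟩, htop⟩ := Subspace.exists_eq_top_of_iUnion_eq_univ hcover
  exact hV p hp fun v hv ↦ (Submodule.eq_top_iff'.mp htop ⟨v, hv⟩ :)

theorem not_subset_of_mem_associatedPrimes_of_colon_eq {I p : Ideal R} {S : Set R}
    (hsat : I.colon S = I) (hp : p ∈ associatedPrimes R (R ⧸ I)) : ¬S ⊆ p := by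
  obtain ⟨hprime, z, rfl⟩ := isAssociatedPrime_iff.mp hp
  obtain ⟨f, rfl⟩ := Ideal.Quotient.mk_surjective z
  intro hS
  have hfI : f ∈ I := by
    rw [← hsat, Submodule.mem_colon]
    intro s hs
    have hsf := Submodule.mem_colon_singleton.mp (hS hs)
    rwa [Submodule.mem_bot, Algebra.smul_def, Ideal.Quotient.algebraMap_eq, ← map_mul,
      Ideal.Quotient.eq_zero_iff_mem, mul_comm] at hsf
  rw [Ideal.Quotient.eq_zero_iff_mem.mpr hfI] at hprime
  exact hprime.ne_top (by simp)

end AssociatedPrimes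

noncomputable section Graded

variable {K : Type*} [Field K] {m : ℕ}

theorem exists_isSMulRegular_linearForm [Infinite K] {I : Ideal (MvPolynomial (Fin m) K)}
    (hsat : I.colon ((Ideal.span (Set.range X) : Ideal (MvPolynomial (Fin m) K)) :
      Set (MvPolynomial (Fin m) K)) = I) :
    ∃ ℓ ∈ homogeneousSubmodule (Fin m) K 1, IsSMulRegular (MvPolynomial (Fin m) K ⧸ I) ℓ := by
  refine exists_isSMulRegular_mem_of_not_le_associatedPrimes _ fun p hp hle ↦ ?_
  refine not_subset_of_mem_associatedPrimes_of_colon_eq hsat hp (Ideal.span_le.mpr ?_)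
  rintro _ ⟨j, rfl⟩
  exact hle ((mem_homogeneousSubmodule 1 _).mpr (isHomogeneous_X K j))

instance (d : ℕ) : Module.Finite K (homogeneousSubmodule (Fin m) K d) :=
  Module.Finite.iff_fg.mpr (homogeneousSubmodule_fg (Fin m) K d)

def degreePart (I : Ideal (MvPolynomial (Fin m) K)) (d : ℕ) :
    Submodule K (homogeneousSubmodule (Fin m) K d) :=
  (I.restrictScalars K).comap (homogeneousSubmodule (Fin m) K d).subtype

theorem hilbertFn_eq_finrank_quotient_degreePart (I : Ideal (MvPolynomial (Fin m) K)) (d : ℕ) :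
    hilbertFn I d = Module.finrank K (homogeneousSubmodule (Fin m) K d ⧸ degreePart I d) :=
  rfl

/-- `relHilbertFn I_X I_Y d = H_{I_Y/I_X}(d)`. -/
def relHilbertFn (IX IY : Ideal (MvPolynomial (Fin m) K)) (d : ℕ) : ℕ :=
  Module.finrank K ((degreePart IY d).map (degreePart IX d).mkQ)

theorem hilbertFn_eq_relHilbertFn_add {IX IY : Ideal (MvPolynomial (Fin m) K)} (hXY : IX ≤ IY)
    (d : ℕ) : hilbertFn IX d = relHilbertFn IX IY d + hilbertFn IY d := by
  have hle : degreePart IX d ≤ degreePart IY d := fun _ hf ↦ hXY hf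
  rw [hilbertFn_eq_finrank_quotient_degreePart, hilbertFn_eq_finrank_quotient_degreePart,
    ← (Submodule.quotientQuotientEquivQuotient _ _ hle).finrank_eq, relHilbertFn, add_comm,
    Submodule.finrank_quotient_add_finrank]

section MulLinearForm

variable {ℓ : MvPolynomial (Fin m) K} (hℓ : ℓ ∈ homogeneousSubmodule (Fin m) K 1)
include hℓ

def mulLinearForm (d : ℕ) :
    homogeneousSubmodule (Fin m) K d →ₗ[K] homogeneousSubmodule (Fin m) K (d + 1) :=
  (LinearMap.mulLeft K ℓ).restrict fun _ hf ↦ by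
    rw [add_comm]
    exact IsHomogeneous.mul hℓ hf

theorem degreePart_le_comap_mulLinearForm (I : Ideal (MvPolynomial (Fin m) K)) (d : ℕ) :
    degreePart I d ≤ (degreePart I (d + 1)).comap (mulLinearForm hℓ d) :=
  fun _ hf ↦ I.mul_mem_left ℓ hf

def quotMulLinearForm (I : Ideal (MvPolynomial (Fin m) K)) (d : ℕ) :
    (homogeneousSubmodule (Fin m) K d ⧸ degreePart I d) →ₗ[K]
      homogeneousSubmodule (Fin m) K (d + 1) ⧸ degreePart I (d + 1) :=
  (degreePart I d).mapQ _ _ (degreePart_le_comap_mulLinearForm hℓ I d)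

theorem quotMulLinearForm_injective {I : Ideal (MvPolynomial (Fin m) K)}
    (hreg : IsSMulRegular (MvPolynomial (Fin m) K ⧸ I) ℓ) (d : ℕ) :
    Function.Injective (quotMulLinearForm hℓ I d) := by
  rw [← LinearMap.ker_eq_bot, eq_bot_iff]
  intro x hx
  obtain ⟨f, rfl⟩ := Submodule.Quotient.mk_surjective _ x
  rw [LinearMap.mem_ker, quotMulLinearForm, Submodule.mapQ_apply,
    Submodule.Quotient.mk_eq_zero] at hx
  rw [Submodule.mem_bot, Submodule.Quotient.mk_eq_zero]
  exact mem_of_isSMulRegular_quotient_of_smul_mem hreg hx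

theorem hilbertFn_monotone {I : Ideal (MvPolynomial (Fin m) K)}
    (hreg : IsSMulRegular (MvPolynomial (Fin m) K ⧸ I) ℓ) : Monotone (hilbertFn I) :=
  monotone_nat_of_le_succ fun d ↦
    LinearMap.finrank_le_finrank_of_injective (quotMulLinearForm_injective hℓ hreg d)

theorem relHilbertFn_monotone {IX : Ideal (MvPolynomial (Fin m) K)}
    (hreg : IsSMulRegular (MvPolynomial (Fin m) K ⧸ IX) ℓ) (IY : Ideal (MvPolynomial (Fin m) K)) :
    Monotone (relHilbertFn IX IY) := by
  refine monotone_nat_of_le_succ fun d ↦ ?_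
  have hmaps : (degreePart IY d).map (degreePart IX d).mkQ ≤
      ((degreePart IY (d + 1)).map (degreePart IX (d + 1)).mkQ).comap
        (quotMulLinearForm hℓ IX d) := by
    rintro _ ⟨f, hf, rfl⟩
    exact ⟨mulLinearForm hℓ d f, IY.mul_mem_left ℓ hf, rfl⟩
  exact LinearMap.finrank_le_finrank_of_injective (f := (quotMulLinearForm hℓ IX d).restrict hmaps)
    fun _ _ h ↦ Subtype.ext (quotMulLinearForm_injective hℓ hreg d (congrArg Subtype.val h))

end MulLinearForm

end Graded

theorem stmt5_general (n : ℕ)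
    (IX IY : Ideal (MvPolynomial (Fin (n + 1)) ℂ))
    (hXY : IX ≤ IY)
    (hsatX : IX.colon ((Ideal.span (Set.range MvPolynomial.X) :
      Ideal (MvPolynomial (Fin (n + 1)) ℂ)) : Set (MvPolynomial (Fin (n + 1)) ℂ)) = IX)
    (hsatY : IY.colon ((Ideal.span (Set.range MvPolynomial.X) :
      Ideal (MvPolynomial (Fin (n + 1)) ℂ)) : Set (MvPolynomial (Fin (n + 1)) ℂ)) = IY)
    (eX eY : ℕ)
    (heX : ∀ᶠ d in Filter.atTop, hilbertFn IX d = eX)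
    (heY : ∀ᶠ d in Filter.atTop, hilbertFn IY d = eY)
    (d : ℕ) (hd : hilbertFn IX d = eX) :
    hilbertFn IY d = eY := by
  obtain ⟨ℓX, hℓX, hregX⟩ := exists_isSMulRegular_linearForm hsatX
  obtain ⟨ℓY, hℓY, hregY⟩ := exists_isSMulRegular_linearForm hsatY
  have hsplit := hilbertFn_eq_relHilbertFn_add hXY
  have hrel : ∀ᶠ D in Filter.atTop, relHilbertFn IX IY D = eX - eY :=
    (heX.and heY).mono fun D ⟨hDX, hDY⟩ ↦ by rw [hsplit] at hDX; omega
  have hYX : eY ≤ eX := by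
    obtain ⟨D, hDX, hDY⟩ := (heX.and heY).exists
    rw [← hDX, ← hDY, hsplit]
    omega
  have hYle := (hilbertFn_monotone hℓY hregY).le_of_eventually_eq heY d
  have hrelle := (relHilbertFn_monotone hℓX hregX IY).le_of_eventually_eq hrel d
  have hdsplit := hsplit d
  omega

/-- Lemma 2.10(3): if `X ⊆ P^n` is a zero-dimensional subscheme (saturated homogeneous
ideal `I_X` with `dim R/I_X = 1`) which is multiplicity `d`-independent
(`H_{R/I_X}(d) = e(R/I_X)`, where the multiplicity is the eventual value of the Hilbert
function), then so is every zero-dimensional subscheme `Y ⊆ X`. -/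
theorem stmt5 (n : ℕ) (hn : 1 ≤ n)
    (IX IY : Ideal (MvPolynomial (Fin (n + 1)) ℂ))
    (hXY : IX ≤ IY)
    (hIXhom : ∀ f ∈ IX, ∀ i : ℕ, MvPolynomial.homogeneousComponent i f ∈ IX)
    (hIYhom : ∀ f ∈ IY, ∀ i : ℕ, MvPolynomial.homogeneousComponent i f ∈ IY)
    (hsatX : IX.colon ((Ideal.span (Set.range MvPolynomial.X) :
      Ideal (MvPolynomial (Fin (n + 1)) ℂ)) : Set (MvPolynomial (Fin (n + 1)) ℂ)) = IX)
    (hsatY : IY.colon ((Ideal.span (Set.range MvPolynomial.X) :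
      Ideal (MvPolynomial (Fin (n + 1)) ℂ)) : Set (MvPolynomial (Fin (n + 1)) ℂ)) = IY)
    (hdimX : ringKrullDim (MvPolynomial (Fin (n + 1)) ℂ ⧸ IX) = 1)
    (hdimY : ringKrullDim (MvPolynomial (Fin (n + 1)) ℂ ⧸ IY) = 1)
    (eX eY : ℕ)
    (heX : ∀ᶠ d in Filter.atTop, hilbertFn IX d = eX)
    (heY : ∀ᶠ d in Filter.atTop, hilbertFn IY d = eY)
    (d : ℕ) (hd : hilbertFn IX d = eX) :
    hilbertFn IY d = eY :=
  stmt5_general n IX IY hXY hsatX hsatY eX eY heX heY d hd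
end

section
/- In R = C[x_0,x_1,x_2,x_3,x_4], let I be the ideal of 2×2 minors of the matrix with rows (x_0,x_1,x_2,x_3) and (x_1,x_2,x_3,x_4) (the defining ideal of the rational normal quartic curve in P^4). Then the cubic F = x_2^3 − 2x_1x_2x_3 + x_0x_3^2 + x_1^2x_4 − x_0x_2x_4 lies in the symbolic square I^{(2)}; equivalently, every partial derivative ∂F/∂x_i lies in I. -/
open MvPolynomial

/-- The cubic `F = x₂³ − 2x₁x₂x₃ + x₀x₃² + x₁²x₄ − x₀x₂x₄`. -/
noncomputable def Fcubic : MvPolynomial (Fin 5) ℂ :=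
  X 2 ^ 3 - 2 * (X 1 * X 2 * X 3) + X 0 * X 3 ^ 2 + X 1 ^ 2 * X 4 - X 0 * X 2 * X 4

/-- For the ideal `I` of 2×2 minors of the matrix with rows `(x₀,x₁,x₂,x₃)` and
`(x₁,x₂,x₃,x₄)` (the rational normal quartic in `ℙ⁴`), the cubic
`F = x₂³ − 2x₁x₂x₃ + x₀x₃² + x₁²x₄ − x₀x₂x₄` lies in the symbolic square `I^{(2)}`:
by Zariski–Nagata, `F ∈ I` and every partial derivative `∂F/∂xᵢ` lies in `I`. -/
theorem stmt15 (I : Ideal (MvPolynomial (Fin 5) ℂ))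
    (hI : I = Ideal.span
      {X 0 * X 2 - X 1 * X 1, X 0 * X 3 - X 1 * X 2, X 0 * X 4 - X 1 * X 3,
       X 1 * X 3 - X 2 * X 2, X 1 * X 4 - X 2 * X 3, X 2 * X 4 - X 3 * X 3}) :
    Fcubic ∈ I ∧ ∀ i : Fin 5, MvPolynomial.pderiv i Fcubic ∈ I := by
  subst hI
  have hg1 : (X 0 * X 2 - X 1 * X 1 : MvPolynomial (Fin 5) ℂ) ∈
      Ideal.span {X 0 * X 2 - X 1 * X 1, X 0 * X 3 - X 1 * X 2, X 0 * X 4 - X 1 * X 3,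
        X 1 * X 3 - X 2 * X 2, X 1 * X 4 - X 2 * X 3, X 2 * X 4 - X 3 * X 3} :=
    Ideal.subset_span (by simp)
  have hg2 : (X 0 * X 3 - X 1 * X 2 : MvPolynomial (Fin 5) ℂ) ∈
      Ideal.span {X 0 * X 2 - X 1 * X 1, X 0 * X 3 - X 1 * X 2, X 0 * X 4 - X 1 * X 3,
        X 1 * X 3 - X 2 * X 2, X 1 * X 4 - X 2 * X 3, X 2 * X 4 - X 3 * X 3} :=
    Ideal.subset_span (by simp)
  have hg3 : (X 0 * X 4 - X 1 * X 3 : MvPolynomial (Fin 5) ℂ) ∈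
      Ideal.span {X 0 * X 2 - X 1 * X 1, X 0 * X 3 - X 1 * X 2, X 0 * X 4 - X 1 * X 3,
        X 1 * X 3 - X 2 * X 2, X 1 * X 4 - X 2 * X 3, X 2 * X 4 - X 3 * X 3} :=
    Ideal.subset_span (by simp)
  have hg4 : (X 1 * X 3 - X 2 * X 2 : MvPolynomial (Fin 5) ℂ) ∈
      Ideal.span {X 0 * X 2 - X 1 * X 1, X 0 * X 3 - X 1 * X 2, X 0 * X 4 - X 1 * X 3,
        X 1 * X 3 - X 2 * X 2, X 1 * X 4 - X 2 * X 3, X 2 * X 4 - X 3 * X 3} :=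
    Ideal.subset_span (by simp)
  have hg5 : (X 1 * X 4 - X 2 * X 3 : MvPolynomial (Fin 5) ℂ) ∈
      Ideal.span {X 0 * X 2 - X 1 * X 1, X 0 * X 3 - X 1 * X 2, X 0 * X 4 - X 1 * X 3,
        X 1 * X 3 - X 2 * X 2, X 1 * X 4 - X 2 * X 3, X 2 * X 4 - X 3 * X 3} :=
    Ideal.subset_span (by simp)
  have hg6 : (X 2 * X 4 - X 3 * X 3 : MvPolynomial (Fin 5) ℂ) ∈
      Ideal.span {X 0 * X 2 - X 1 * X 1, X 0 * X 3 - X 1 * X 2, X 0 * X 4 - X 1 * X 3,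
        X 1 * X 3 - X 2 * X 2, X 1 * X 4 - X 2 * X 3, X 2 * X 4 - X 3 * X 3} :=
    Ideal.subset_span (by simp)
  have pd2 : ∀ i : Fin 5, pderiv i (2 : MvPolynomial (Fin 5) ℂ) = 0 := by
    intro i
    rw [show (2 : MvPolynomial (Fin 5) ℂ) = C 2 from (map_ofNat _ 2).symm]
    simp
  constructor
  · have hF : Fcubic = (-(X 2)) * (X 1 * X 3 - X 2 * X 2) + (X 3) * (X 0 * X 3 - X 1 * X 2)
        + (-(X 4)) * (X 0 * X 2 - X 1 * X 1) := by
      unfold Fcubic; ring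
    rw [hF]
    exact add_mem (add_mem (Ideal.mul_mem_left _ _ hg4) (Ideal.mul_mem_left _ _ hg2))
      (Ideal.mul_mem_left _ _ hg1)
  · intro i
    fin_cases i
    · have h : pderiv (0 : Fin 5) Fcubic = (-1) * (X 2 * X 4 - X 3 * X 3) := by
        simp [Fcubic, pderiv_X, pd2]; ring
      exact Set.mem_of_eq_of_mem h (Ideal.mul_mem_left _ _ hg6)
    · have h : pderiv (1 : Fin 5) Fcubic = (2 : MvPolynomial (Fin 5) ℂ) * (X 1 * X 4 - X 2 * X 3) := by
        simp [Fcubic, pderiv_X, pd2]; ring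
      exact Set.mem_of_eq_of_mem h (Ideal.mul_mem_left _ _ hg5)
    · have h : pderiv (2 : Fin 5) Fcubic = (-3 : MvPolynomial (Fin 5) ℂ) * (X 1 * X 3 - X 2 * X 2)
          + (-1) * (X 0 * X 4 - X 1 * X 3) := by
        simp [Fcubic, pderiv_X, pd2]; ring
      exact Set.mem_of_eq_of_mem h (add_mem (Ideal.mul_mem_left _ _ hg4) (Ideal.mul_mem_left _ _ hg3))
    · have h : pderiv (3 : Fin 5) Fcubic = (2 : MvPolynomial (Fin 5) ℂ) * (X 0 * X 3 - X 1 * X 2) := by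
        simp [Fcubic, pderiv_X, pd2]; ring
      exact Set.mem_of_eq_of_mem h (Ideal.mul_mem_left _ _ hg2)
    · have h : pderiv (4 : Fin 5) Fcubic = (-1) * (X 0 * X 2 - X 1 * X 1) := by
        simp [Fcubic, pderiv_X, pd2]; ring
      exact Set.mem_of_eq_of_mem h (Ideal.mul_mem_left _ _ hg1)
end
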